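/- If ⟨f, {g_s}⟩ is an MDP homomorphism from M onto M', then the optimal state-value functions satisfy V*(s) = V'*(f(s)) for every s ∈ S. -/

import Mathlib

open Finset
open scoped Classical

/-- Bellman optimality operator for a finite MDP. -/
noncomputable def Bop {S A : Type*} [Fintype S] [Fintype A] [Nonempty A]
    (T : S → A → S → ℝ) (R : S → A → ℝ) (γ : ℝ) (Q : S → A → ℝ) : S → A → ℝ :=
  fun s a => R s a + γ * ∑ s' : S, T s a s' *
    (Finset.univ.sup' Finset.univ_nonempty (fun a' => Q s' a'))

/-!
The pullback `Q̃ s a = Q'* (f s) (g s a)` of the optimal action values of `M'` is again a fixed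
point of the Bellman operator of `M`: rewards agree, the transition mass of `M'` into
`s'` is the mass of `M` into the block `f⁻¹ s'`, and since every `g s` is surjective, maximising
`Q̃ s` over `A` is maximising `Q'* (f s)` over `A'`. For `γ < 1` the Bellman operator is a
`γ`-contraction in the sup-metric, so `Q̃ = Q*`, and maximising over actions gives the claim.
-/

theorem abs_sup'_sub_sup'_le {ι : Type*} {s : Finset ι} (hs : s.Nonempty) {u v : ι → ℝ} {C : ℝ}
    (h : ∀ i ∈ s, |u i - v i| ≤ C) : |s.sup' hs u - s.sup' hs v| ≤ C := by
  rw [abs_sub_le_iff, sub_le_iff_le_add, sub_le_iff_le_add]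
  constructor
  · refine sup'_le hs u fun i hi => ?_
    linarith [(abs_sub_le_iff.1 (h i hi)).1, le_sup' v hi]
  · refine sup'_le hs v fun i hi => ?_
    linarith [(abs_sub_le_iff.1 (h i hi)).2, le_sup' u hi]

theorem Function.Surjective.univ_sup'_comp {α β γ : Type*} [Fintype α] [Fintype β] [Nonempty α]
    [Nonempty β] [SemilatticeSup γ] {g : α → β} (hg : g.Surjective) (u : β → γ) :
    univ.sup' univ_nonempty (u ∘ g) = univ.sup' univ_nonempty u := by
  simp only [sup'_comp_eq_image, image_univ_of_surjective hg]

theorem sum_fiberwise_mul {ι κ M : Type*} [Fintype ι] [Fintype κ] [NonUnitalNonAssocSemiring M]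
    (f : ι → κ) (w : ι → M) (v : κ → M) :
    ∑ y, (∑ x ∈ univ.filter (fun x => f x = y), w x) * v y = ∑ x, w x * v (f x) := by
  calc ∑ y, (∑ x ∈ univ.filter (fun x => f x = y), w x) * v y
      = ∑ y, ∑ x ∈ univ.filter (fun x => f x = y), w x * v (f x) :=
        sum_congr rfl fun y _ => by
          rw [sum_mul]
          exact sum_congr rfl fun x hx => by rw [(mem_filter.1 hx).2]
    _ = ∑ x, w x * v (f x) := sum_fiberwise _ _ _

section Bellman

variable {S A : Type*} [Fintype A] [Nonempty A]

noncomputable def stateValue (Q : S → A → ℝ) (s : S) : ℝ :=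
  univ.sup' univ_nonempty (Q s)

variable {S' A' : Type*} [Fintype A'] [Nonempty A'] {f : S → S'} {g : S → A → A'}

theorem stateValue_pullback (hgsurj : ∀ s, (g s).Surjective) (Q' : S' → A' → ℝ) (s : S) :
    stateValue (fun s a => Q' (f s) (g s a)) s = stateValue Q' (f s) :=
  (hgsurj s).univ_sup'_comp (Q' (f s))

variable [Fintype S]

theorem Bop_apply (T : S → A → S → ℝ) (R : S → A → ℝ) (γ : ℝ) (Q : S → A → ℝ) (s : S) (a : A) :
    Bop T R γ Q s a = R s a + γ * ∑ s', T s a s' * stateValue Q s' :=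
  rfl

theorem abs_stateValue_sub_le_dist (Q₁ Q₂ : S → A → ℝ) (s : S) :
    |stateValue Q₁ s - stateValue Q₂ s| ≤ dist Q₁ Q₂ :=
  abs_sup'_sub_sup'_le _ fun a _ =>
    Real.dist_eq (Q₁ s a) _ ▸ (dist_le_pi_dist _ _ a).trans (dist_le_pi_dist Q₁ Q₂ s)

variable {T : S → A → S → ℝ} {R : S → A → ℝ} {γ : ℝ}

theorem dist_Bop_le (hγ : 0 ≤ γ) (hTnn : ∀ s a s', 0 ≤ T s a s')
    (hTsum : ∀ s a, ∑ s', T s a s' ≤ 1) (Q₁ Q₂ : S → A → ℝ) :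
    dist (Bop T R γ Q₁) (Bop T R γ Q₂) ≤ γ * dist Q₁ Q₂ := by
  have hd : 0 ≤ γ * dist Q₁ Q₂ := mul_nonneg hγ dist_nonneg
  refine (dist_pi_le_iff hd).2 fun s => (dist_pi_le_iff hd).2 fun a => ?_
  rw [Real.dist_eq, Bop_apply, Bop_apply]
  calc |R s a + γ * ∑ s', T s a s' * stateValue Q₁ s' -
          (R s a + γ * ∑ s', T s a s' * stateValue Q₂ s')|
      = |γ * ∑ s', T s a s' * (stateValue Q₁ s' - stateValue Q₂ s')| := by
        simp only [mul_sub, sum_sub_distrib]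
        ring_nf
    _ = γ * |∑ s', T s a s' * (stateValue Q₁ s' - stateValue Q₂ s')| := by
        rw [abs_mul, abs_of_nonneg hγ]
    _ ≤ γ * ∑ s', T s a s' * dist Q₁ Q₂ := by
        gcongr
        refine (abs_sum_le_sum_abs _ _).trans (sum_le_sum fun s' _ => ?_)
        rw [abs_mul, abs_of_nonneg (hTnn s a s')]
        exact mul_le_mul_of_nonneg_left (abs_stateValue_sub_le_dist Q₁ Q₂ s') (hTnn s a s')
    _ ≤ γ * dist Q₁ Q₂ := by
        rw [← sum_mul]
        exact mul_le_mul_of_nonneg_left (mul_le_of_le_one_left dist_nonneg (hTsum s a)) hγ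

theorem Bop_fixedPoint_unique (hγ0 : 0 ≤ γ) (hγ1 : γ < 1) (hTnn : ∀ s a s', 0 ≤ T s a s')
    (hTsum : ∀ s a, ∑ s', T s a s' ≤ 1) {Q₁ Q₂ : S → A → ℝ}
    (h₁ : Bop T R γ Q₁ = Q₁) (h₂ : Bop T R γ Q₂ = Q₂) : Q₁ = Q₂ := by
  have hcontr := dist_Bop_le (R := R) hγ0 hTnn hTsum Q₁ Q₂
  rw [h₁, h₂] at hcontr
  exact dist_le_zero.1 (by nlinarith [dist_nonneg (x := Q₁) (y := Q₂)])

variable [Fintype S'] {T' : S' → A' → S' → ℝ} {R' : S' → A' → ℝ}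

theorem Bop_pullback
    (hT : ∀ s a s', T' (f s) (g s a) s' = ∑ x ∈ univ.filter (fun x => f x = s'), T s a x)
    (hR : ∀ s a, R' (f s) (g s a) = R s a) (hgsurj : ∀ s, (g s).Surjective) (Q' : S' → A' → ℝ) :
    Bop T R γ (fun s a => Q' (f s) (g s a)) = fun s a => Bop T' R' γ Q' (f s) (g s a) := by
  funext s a
  simp only [Bop_apply, hR, hT, sum_fiberwise_mul, stateValue_pullback hgsurj]

end Bellman

theorem optimal_state_value_equivalence_general
    {S A S' A' : Type*} [Fintype S] [Fintype A] [Fintype S'] [Fintype A']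
    [Nonempty A] [Nonempty A']
    (T : S → A → S → ℝ) (R : S → A → ℝ)
    (T' : S' → A' → S' → ℝ) (R' : S' → A' → ℝ)
    (γ : ℝ) (hγ0 : 0 ≤ γ) (hγ1 : γ < 1)
    (hTnn : ∀ s a s'', 0 ≤ T s a s'') (hTsum : ∀ s a, ∑ s'' : S, T s a s'' = 1)
    (f : S → S') (g : S → A → A')
    (hgsurj : ∀ s, Function.Surjective (g s))
    (hT : ∀ s a s', T' (f s) (g s a) s' = ∑ x ∈ Finset.univ.filter (fun x => f x = s'), T s a x)
    (hR : ∀ s a, R' (f s) (g s a) = R s a)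
    (Qstar : S → A → ℝ) (hQstar : Bop T R γ Qstar = Qstar)
    (Q'star : S' → A' → ℝ) (hQ'star : Bop T' R' γ Q'star = Q'star) :
    ∀ s : S, Finset.univ.sup' Finset.univ_nonempty (fun a => Qstar s a) =
      Finset.univ.sup' Finset.univ_nonempty (fun a' => Q'star (f s) a') := by
  intro s
  have hpullback_fixed : Bop T R γ (fun s a => Q'star (f s) (g s a)) =
      fun s a => Q'star (f s) (g s a) := by
    rw [Bop_pullback hT hR hgsurj, hQ'star]
  rw [← Bop_fixedPoint_unique hγ0 hγ1 hTnn (fun s a => (hTsum s a).le) hpullback_fixed hQstar]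
  exact stateValue_pullback hgsurj Q'star s

/-- Under an MDP homomorphism, the optimal state-value functions satisfy
`V*(s) = V'*(f s)`. -/
theorem optimal_state_value_equivalence
    {S A S' A' : Type*} [Fintype S] [Fintype A] [Fintype S'] [Fintype A']
    [Nonempty S] [Nonempty A] [Nonempty S'] [Nonempty A']
    (T : S → A → S → ℝ) (R : S → A → ℝ)
    (T' : S' → A' → S' → ℝ) (R' : S' → A' → ℝ)
    (γ : ℝ) (hγ0 : 0 ≤ γ) (hγ1 : γ < 1)
    (hTnn : ∀ s a s'', 0 ≤ T s a s'') (hTsum : ∀ s a, ∑ s'' : S, T s a s'' = 1)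
    (hT'nn : ∀ s a s'', 0 ≤ T' s a s'') (hT'sum : ∀ s a, ∑ s'' : S', T' s a s'' = 1)
    (f : S → S') (g : S → A → A')
    (hfsurj : Function.Surjective f) (hgsurj : ∀ s, Function.Surjective (g s))
    (hT : ∀ s a s', T' (f s) (g s a) s' = ∑ x ∈ Finset.univ.filter (fun x => f x = s'), T s a x)
    (hR : ∀ s a, R' (f s) (g s a) = R s a)
    (Qstar : S → A → ℝ) (hQstar : Bop T R γ Qstar = Qstar)
    (Q'star : S' → A' → ℝ) (hQ'star : Bop T' R' γ Q'star = Q'star) :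
    ∀ s : S, Finset.univ.sup' Finset.univ_nonempty (fun a => Qstar s a) =
      Finset.univ.sup' Finset.univ_nonempty (fun a' => Q'star (f s) a') :=
  optimal_state_value_equivalence_general T R T' R' γ hγ0 hγ1 hTnn hTsum f g hgsurj hT hR Qstar
    hQstar Q'star hQ'star
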